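/- Let (w̃, m̃, H̃) solve the cell problem: for each x ∈ 𝕋^d and Λ ∈ ℝ^d, (1/2)|Λ+∇_y w̃(x,Λ,y)|² + V(x,y) = ln m̃(x,Λ,y) + H̃(x,Λ) and −div_y(m̃(Λ+∇_y w̃)) = 0 in 𝒴^d with ∫_{𝒴^d} m̃ dy = 1, m̃ > 0, where w̃, m̃, H̃ depend smoothly on (x,Λ). Then there exists a constant C > 0, independent of x and Λ, such that for every j ∈ {1,…,d}, |∂H̃/∂x_j (x,Λ)| ≤ C for all x ∈ 𝕋^d and Λ ∈ ℝ^d. -/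

import Mathlib

open MeasureTheory Filter Topology Function

noncomputable section

/-- The unit cell `𝒴^d = [0,1)^d`. -/
def cube (d : ℕ) : Set (Fin d → ℝ) := Set.univ.pi fun _ => Set.Ico (0 : ℝ) 1

/-- `ℤ^d`-periodicity of a function on `ℝ^d`; functions on the torus `𝕋^d`
(and `𝒴^d`-periodic functions) are identified with such functions. -/
def ZPer {d : ℕ} (f : (Fin d → ℝ) → ℝ) : Prop :=
  ∀ (x : Fin d → ℝ) (k : Fin d → ℤ), f (fun i => x i + (k i : ℝ)) = f x

/-- The `i`-th partial derivative. -/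
def pder {d : ℕ} (i : Fin d) (f : (Fin d → ℝ) → ℝ) (x : Fin d → ℝ) : ℝ :=
  fderiv ℝ f x (Pi.single i 1)

/-- `V : 𝕋^d × ℝ^d → ℝ` smooth, `𝒴^d`-periodic in the second variable
(and periodic in the first, i.e. defined on the torus). -/
def SmoothV {d : ℕ} (V : (Fin d → ℝ) → (Fin d → ℝ) → ℝ) : Prop :=
  ContDiff ℝ (⊤ : ℕ∞) (uncurry V) ∧ (∀ y, ZPer fun x => V x y) ∧ (∀ x, ZPer (V x))

/-- `sup_{(x,y) ∈ 𝕋^d × 𝒴^d} V (x,y)` (by periodicity, the sup over all of `ℝ^d × ℝ^d`). -/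
def supV {d : ℕ} (V : (Fin d → ℝ) → (Fin d → ℝ) → ℝ) : ℝ :=
  ⨆ q : (Fin d → ℝ) × (Fin d → ℝ), V q.1 q.2

/-- `inf_{(x,y) ∈ 𝕋^d × 𝒴^d} V (x,y)`. -/
def infV {d : ℕ} (V : (Fin d → ℝ) → (Fin d → ℝ) → ℝ) : ℝ :=
  ⨅ q : (Fin d → ℝ) × (Fin d → ℝ), V q.1 q.2

/-- `(w, m, H)` is a classical solution of the cell problem at `(x, Λ)`:
`|Λ+∇_y w|²/2 + V(x,y) = ln m + H`, `-div_y(m (Λ+∇_y w)) = 0` in `𝒴^d`, `∫_{𝒴^d} m = 1`. -/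
def CellSolAt {d : ℕ} (V : (Fin d → ℝ) → (Fin d → ℝ) → ℝ)
    (x Λ : Fin d → ℝ) (w m : (Fin d → ℝ) → ℝ) (H : ℝ) : Prop :=
  ContDiff ℝ 2 w ∧ ZPer w ∧ ContDiff ℝ 1 m ∧ ZPer m ∧ (∀ y, 0 < m y) ∧
  (∀ y, (∑ i, (Λ i + pder i w y) ^ 2) / 2 + V x y = Real.log (m y) + H) ∧
  (∀ y, (∑ i, pder i (fun z => m z * (Λ i + pder i w z)) y) = 0) ∧
  (∫ y in cube d, m y) = 1

section aux
variable {d : ℕ}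


variable {d : ℕ}

lemma fderiv_shift_eq {E : Type*} [NormedAddCommGroup E] [NormedSpace ℝ E]
    {f : E → ℝ} (hf : Differentiable ℝ f) (c : E) (h : ∀ z, f (z + c) = f z) (x : E) :
    fderiv ℝ f (x + c) = fderiv ℝ f x := by
  have h1 : HasFDerivAt (fun z => f (z + c)) (fderiv ℝ f (x + c)) x := by
    have h2 := (hf (x + c)).hasFDerivAt
    have h3 : HasFDerivAt (fun z : E => z + c) (ContinuousLinearMap.id ℝ E) x :=
      (hasFDerivAt_id x).add_const c
    have h4 := h2.comp x h3
    rw [ContinuousLinearMap.comp_id] at h4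
    exact h4
  rw [funext h] at h1
  exact h1.fderiv.symm

lemma zper_pder {f : (Fin d → ℝ) → ℝ} (hf : Differentiable ℝ f) (hper : ZPer f) (i : Fin d) :
    ZPer (pder i f) := by
  intro x k
  show pder i f (fun i' => x i' + ((k i' : ℝ))) = pder i f x
  have hx : (fun i' => x i' + (k i' : ℝ)) = x + (fun i' => (k i' : ℝ)) := rfl
  unfold pder
  rw [hx, fderiv_shift_eq hf _ (fun z => hper z k) x]

lemma contDiff_pder {f : (Fin d → ℝ) → ℝ} {n : ℕ∞} (hf : ContDiff ℝ (n + 1) f) (i : Fin d) :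
    ContDiff ℝ n (pder i f) :=
  (hf.fderiv_right le_rfl).clm_apply contDiff_const

lemma pder_mul {f g : (Fin d → ℝ) → ℝ} {y : Fin d → ℝ} (hf : DifferentiableAt ℝ f y)
    (hg : DifferentiableAt ℝ g y) (i : Fin d) :
    pder i (fun z => f z * g z) y = pder i f y * g y + f y * pder i g y := by
  unfold pder
  rw [fderiv_fun_mul hf hg]
  simp only [ContinuousLinearMap.add_apply, ContinuousLinearMap.smul_apply, smul_eq_mul]
  ring

lemma pder_sub {f g : (Fin d → ℝ) → ℝ} {y : Fin d → ℝ} (hf : DifferentiableAt ℝ f y)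
    (hg : DifferentiableAt ℝ g y) (i : Fin d) :
    pder i (fun z => f z - g z) y = pder i f y - pder i g y := by
  unfold pder
  rw [fderiv_fun_sub hf hg]
  simp

lemma cube_subset_Icc : cube d ⊆ Set.Icc (0 : Fin d → ℝ) 1 := by
  rw [← Set.pi_univ_Icc]
  exact Set.pi_mono fun i _ => Set.Ico_subset_Icc_self

lemma measurableSet_cube : MeasurableSet (cube d) :=
  MeasurableSet.univ_pi fun _ => measurableSet_Ico

lemma integrableOn_cube {f : (Fin d → ℝ) → ℝ} (hf : Continuous f) : IntegrableOn f (cube d) :=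
  (hf.continuousOn.integrableOn_compact isCompact_Icc).mono_set cube_subset_Icc




lemma integral_cube_sum_pder {d : ℕ} {g : Fin d → (Fin d → ℝ) → ℝ}
    (hg : ∀ i, ContDiff ℝ 1 (g i)) (hper : ∀ i, ZPer (g i)) :
    ∫ y in cube d, (∑ i, pder i (g i) y) = 0 := by
  cases d with
  | zero => simp
  | succ n =>
    have hae : (cube (n + 1) : Set (Fin (n + 1) → ℝ)) =ᵐ[volume]
        Set.Icc (0 : Fin (n + 1) → ℝ) 1 := by
      have h1 := MeasureTheory.Measure.univ_pi_Ico_ae_eq_Icc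
        (α := fun _ : Fin (n + 1) => ℝ) (μ := fun _ => volume)
        (f := fun _ => (0 : ℝ)) (g := fun _ => (1 : ℝ))
      rw [← volume_pi] at h1
      exact h1
    rw [setIntegral_congr_set hae]
    have hpc : ∀ i : Fin (n + 1), Continuous (pder i (g i)) := fun i =>
      (contDiff_pder (n := 0) (by simpa using hg i) i).continuous
    have key := MeasureTheory.integral_divergence_of_hasFDerivAt_off_countable'
      (0 : Fin (n + 1) → ℝ) 1 (by intro i; norm_num) g (fun i x => fderiv ℝ (g i) x)
      ∅ Set.countable_empty
      (fun i => (hg i).continuous.continuousOn)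
      (fun x _ i => ((hg i).differentiable (by norm_num) x).hasFDerivAt)
      (((continuous_finset_sum Finset.univ fun i _ => hpc i).continuousOn).integrableOn_compact
        isCompact_Icc)
    have hface : ∀ i : Fin (n + 1), ∀ z : Fin n → ℝ,
        g i (i.insertNth ((1 : Fin (n + 1) → ℝ) i) z) =
          g i (i.insertNth ((0 : Fin (n + 1) → ℝ) i) z) := by
      intro i z
      have hk := hper i (i.insertNth (0 : ℝ) z) (Pi.single i 1)
      have harg : (fun j => (i.insertNth (0 : ℝ) z : Fin (n + 1) → ℝ) j +
          (((Pi.single i 1 : Fin (n + 1) → ℤ) j : ℤ) : ℝ)) = i.insertNth (1 : ℝ) z := by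
        funext j
        rcases eq_or_ne j i with rfl | hne
        · simp [Fin.insertNth_apply_same]
        · obtain ⟨l, rfl⟩ := Fin.exists_succAbove_eq hne
          simp [Fin.insertNth_apply_succAbove, Pi.single_eq_of_ne (Fin.succAbove_ne i l)]
      rw [harg] at hk
      exact hk
    unfold pder
    rw [key]
    refine Finset.sum_eq_zero fun i _ => ?_
    rw [sub_eq_zero]
    exact integral_congr_ae (Filter.Eventually.of_forall fun z => hface i z)

end aux
section cell
variable {d : ℕ}

lemma cell_exp_eq {V : (Fin d → ℝ) → (Fin d → ℝ) → ℝ} {x Λ : Fin d → ℝ}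
    {w m : (Fin d → ℝ) → ℝ} {H : ℝ} (h : CellSolAt V x Λ w m H) :
    ∫ y in cube d, Real.exp ((∑ i, (Λ i + pder i w y) ^ 2) / 2 + V x y) = Real.exp H := by
  obtain ⟨hw, hwp, hm, hmp, hmpos, heq, hdiv, hint⟩ := h
  have hpt : ∀ y, Real.exp ((∑ i, (Λ i + pder i w y) ^ 2) / 2 + V x y) = m y * Real.exp H := by
    intro y; rw [heq y, Real.exp_add, Real.exp_log (hmpos y)]
  rw [integral_congr_ae (Filter.Eventually.of_forall hpt), integral_mul_const, hint, one_mul]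

lemma cell_min {V : (Fin d → ℝ) → (Fin d → ℝ) → ℝ} {x Λ : Fin d → ℝ}
    {w₂ m₂ : (Fin d → ℝ) → ℝ} {H₂ : ℝ} (hVc : Continuous (V x))
    (h : CellSolAt V x Λ w₂ m₂ H₂) {u : (Fin d → ℝ) → ℝ}
    (hu : ContDiff ℝ 2 u) (hup : ZPer u) :
    Real.exp H₂ ≤ ∫ y in cube d, Real.exp ((∑ i, (Λ i + pder i u y) ^ 2) / 2 + V x y) := by
  obtain ⟨hw, hwp, hm, hmp, hmpos, heq, hdiv, hint⟩ := h
  have hw1 : ContDiff ℝ ((1 : ℕ∞) + 1) w₂ := hw.of_le (by norm_num)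
  have hu1 : ContDiff ℝ ((1 : ℕ∞) + 1) u := hu.of_le (by norm_num)
  have hpw : ∀ i, ContDiff ℝ 1 (pder i w₂) := fun i => contDiff_pder hw1 i
  have hpu : ∀ i, ContDiff ℝ 1 (pder i u) := fun i => contDiff_pder hu1 i
  set D : (Fin d → ℝ) → ℝ :=
    fun y => ∑ i, (Λ i + pder i w₂ y) * (pder i u y - pder i w₂ y) with hD
  have hDc : Continuous D := continuous_finset_sum _ fun i _ =>
    (continuous_const.add (hpw i).continuous).mul ((hpu i).continuous.sub (hpw i).continuous)
  have hpt : ∀ y, m₂ y * Real.exp H₂ * (1 + D y) ≤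
      Real.exp ((∑ i, (Λ i + pder i u y) ^ 2) / 2 + V x y) := by
    intro y
    set A := (∑ i, (Λ i + pder i u y) ^ 2) / 2 + V x y with hA
    set B := (∑ i, (Λ i + pder i w₂ y) ^ 2) / 2 + V x y with hB
    have hBe : Real.exp B = m₂ y * Real.exp H₂ := by
      rw [hB, heq y, Real.exp_add, Real.exp_log (hmpos y)]
    have h1 : D y ≤ A - B := by
      have h2 : D y ≤ ∑ i, ((Λ i + pder i u y) ^ 2 - (Λ i + pder i w₂ y) ^ 2) / 2 :=
        Finset.sum_le_sum fun i _ => by nlinarith [sq_nonneg (pder i u y - pder i w₂ y)]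
      have h3 : ∑ i, ((Λ i + pder i u y) ^ 2 - (Λ i + pder i w₂ y) ^ 2) / 2 = A - B := by
        rw [hA, hB, ← Finset.sum_div, Finset.sum_sub_distrib]; ring
      exact le_of_le_of_eq h2 h3
    have h3 : 1 + D y ≤ Real.exp (A - B) := by
      have := Real.add_one_le_exp (A - B); linarith
    calc m₂ y * Real.exp H₂ * (1 + D y) = Real.exp B * (1 + D y) := by rw [hBe]
      _ ≤ Real.exp B * Real.exp (A - B) := mul_le_mul_of_nonneg_left h3 (Real.exp_pos B).le
      _ = Real.exp A := by rw [← Real.exp_add]; congr 1; ring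
  have hmD : ∫ y in cube d, m₂ y * D y = 0 := by
    have hgc : ∀ i : Fin d, ContDiff ℝ 1 (fun z => m₂ z * (Λ i + pder i w₂ z) * (u z - w₂ z)) :=
      fun i => (hm.mul (contDiff_const.add (hpw i))).mul
        ((hu.sub hw).of_le (by norm_num))
    have hgp : ∀ i : Fin d, ZPer (fun z => m₂ z * (Λ i + pder i w₂ z) * (u z - w₂ z)) := by
      intro i z k
      have e1 := hmp z k
      have e2 := zper_pder (hw.differentiable (by norm_num)) hwp i z k
      have e3 := hup z k
      have e4 := hwp z k
      simp only [e1, e2, e3, e4]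
    have hptw : ∀ y, m₂ y * D y =
        ∑ i, pder i (fun z => m₂ z * (Λ i + pder i w₂ z) * (u z - w₂ z)) y := by
      intro y
      have hmd : DifferentiableAt ℝ m₂ y := hm.differentiable (by norm_num) y
      have hud : DifferentiableAt ℝ u y := hu.differentiable (by norm_num) y
      have hwd : DifferentiableAt ℝ w₂ y := hw.differentiable (by norm_num) y
      have hψd : DifferentiableAt ℝ (fun z => u z - w₂ z) y := hud.sub hwd
      have hstep : ∀ i : Fin d,
          pder i (fun z => m₂ z * (Λ i + pder i w₂ z) * (u z - w₂ z)) y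
            = pder i (fun z => m₂ z * (Λ i + pder i w₂ z)) y * (u y - w₂ y)
              + m₂ y * (Λ i + pder i w₂ y) * ((Λ i + pder i u y) - (Λ i + pder i w₂ y)) := by
        intro i
        have hFd : DifferentiableAt ℝ (fun z => m₂ z * (Λ i + pder i w₂ z)) y :=
          hmd.mul (((hpw i).differentiable (by norm_num) y).const_add (Λ i))
        rw [pder_mul hFd hψd i, pder_sub hud hwd i]
        ring
      rw [Finset.sum_congr rfl (fun i _ => hstep i), Finset.sum_add_distrib,
        ← Finset.sum_mul, hdiv y, zero_mul, zero_add, hD, Finset.mul_sum]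
      exact Finset.sum_congr rfl fun i _ => by ring
    rw [integral_congr_ae (Filter.Eventually.of_forall hptw)]
    exact integral_cube_sum_pder hgc hgp
  have hint1 : IntegrableOn (fun y => m₂ y * Real.exp H₂ * (1 + D y)) (cube d) :=
    integrableOn_cube ((hm.continuous.mul continuous_const).mul (continuous_const.add hDc))
  have hint2 : IntegrableOn
      (fun y => Real.exp ((∑ i, (Λ i + pder i u y) ^ 2) / 2 + V x y)) (cube d) :=
    integrableOn_cube (Real.continuous_exp.comp
      (((continuous_finset_sum _ fun i _ =>
        (continuous_const.add (hpu i).continuous).pow 2).div_const 2).add hVc))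
  have hmono := setIntegral_mono_on hint1 hint2 measurableSet_cube (fun y _ => hpt y)
  have hlhs : ∫ y in cube d, m₂ y * Real.exp H₂ * (1 + D y) = Real.exp H₂ := by
    have hr : ∀ y, m₂ y * Real.exp H₂ * (1 + D y) = Real.exp H₂ * (m₂ y + m₂ y * D y) :=
      fun y => by ring
    rw [integral_congr_ae (Filter.Eventually.of_forall hr), integral_const_mul,
      integral_add (integrableOn_cube hm.continuous) (integrableOn_cube (f := fun y => m₂ y * D y) (hm.continuous.mul hDc)),
      hint, hmD, add_zero, mul_one]
  linarith

end cell
section lip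
variable {d : ℕ}

lemma H_lip {V : (Fin d → ℝ) → (Fin d → ℝ) → ℝ} (hV : SmoothV V)
    {w m : (Fin d → ℝ) → (Fin d → ℝ) → (Fin d → ℝ) → ℝ}
    {H : (Fin d → ℝ) → (Fin d → ℝ) → ℝ}
    (hsol : ∀ x Λ, CellSolAt V x Λ (w x Λ) (m x Λ) (H x Λ))
    {M : ℝ} (hM : ∀ q : (Fin d → ℝ) × (Fin d → ℝ), ‖fderiv ℝ (uncurry V) q‖ ≤ M)
    (x x' Λ : Fin d → ℝ) : H x' Λ ≤ H x Λ + M * ‖x' - x‖ := by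
  have hVd : Differentiable ℝ (uncurry V) := hV.1.differentiable (by simp)
  have hVlip : ∀ y, V x' y - V x y ≤ M * ‖x' - x‖ := by
    intro y
    have h1 := convex_univ.norm_image_sub_le_of_norm_fderiv_le
      (f := uncurry V) (fun q _ => hVd q) (fun q _ => hM q)
      (Set.mem_univ ((x, y) : (Fin d → ℝ) × (Fin d → ℝ))) (Set.mem_univ (x', y))
    have h2 : ‖((x', y) : (Fin d → ℝ) × (Fin d → ℝ)) - (x, y)‖ = ‖x' - x‖ := by
      simp [Prod.norm_def]
    rw [h2] at h1
    have h3 : |V x' y - V x y| ≤ M * ‖x' - x‖ := by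
      simpa [Real.norm_eq_abs] using h1
    exact (le_abs_self _).trans h3
  have hVcx : ∀ x0 : Fin d → ℝ, Continuous (V x0) := fun x0 =>
    hV.1.continuous.comp (Continuous.prodMk_right x0)
  obtain ⟨hw2, hwp2, -, -, -, -, -, -⟩ := hsol x Λ
  have h3 : Real.exp (H x' Λ) ≤
      ∫ y in cube d, Real.exp ((∑ i, (Λ i + pder i (w x Λ) y) ^ 2) / 2 + V x' y) :=
    cell_min (hVcx x') (hsol x' Λ) hw2 hwp2
  have hw1 : ContDiff ℝ ((1 : ℕ∞) + 1) (w x Λ) := hw2.of_le (by norm_num)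
  have hpu : ∀ i, Continuous (pder i (w x Λ)) := fun i => (contDiff_pder hw1 i).continuous
  have hSc : Continuous (fun y => (∑ i, (Λ i + pder i (w x Λ) y) ^ 2) / 2) :=
    (continuous_finset_sum _ fun i _ => (continuous_const.add (hpu i)).pow 2).div_const 2
  have h4 : ∫ y in cube d, Real.exp ((∑ i, (Λ i + pder i (w x Λ) y) ^ 2) / 2 + V x' y)
      ≤ Real.exp (H x Λ) * Real.exp (M * ‖x' - x‖) := by
    have hpt : ∀ y, Real.exp ((∑ i, (Λ i + pder i (w x Λ) y) ^ 2) / 2 + V x' y) ≤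
        Real.exp ((∑ i, (Λ i + pder i (w x Λ) y) ^ 2) / 2 + V x y) * Real.exp (M * ‖x' - x‖) := by
      intro y
      rw [← Real.exp_add]
      apply Real.exp_le_exp.2
      linarith [hVlip y]
    have hi1 : IntegrableOn
        (fun y => Real.exp ((∑ i, (Λ i + pder i (w x Λ) y) ^ 2) / 2 + V x' y)) (cube d) :=
      integrableOn_cube (Real.continuous_exp.comp (hSc.add (hVcx x')))
    have hi2 : IntegrableOn
        (fun y => Real.exp ((∑ i, (Λ i + pder i (w x Λ) y) ^ 2) / 2 + V x y) *
          Real.exp (M * ‖x' - x‖)) (cube d) :=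
      integrableOn_cube ((Real.continuous_exp.comp (hSc.add (hVcx x))).mul continuous_const)
    calc ∫ y in cube d, Real.exp ((∑ i, (Λ i + pder i (w x Λ) y) ^ 2) / 2 + V x' y)
        ≤ ∫ y in cube d, Real.exp ((∑ i, (Λ i + pder i (w x Λ) y) ^ 2) / 2 + V x y) *
            Real.exp (M * ‖x' - x‖) :=
          setIntegral_mono_on hi1 hi2 measurableSet_cube (fun y _ => hpt y)
      _ = (∫ y in cube d, Real.exp ((∑ i, (Λ i + pder i (w x Λ) y) ^ 2) / 2 + V x y)) *
            Real.exp (M * ‖x' - x‖) := integral_mul_const _ _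
      _ = Real.exp (H x Λ) * Real.exp (M * ‖x' - x‖) := by rw [cell_exp_eq (hsol x Λ)]
  have h5 : Real.exp (H x' Λ) ≤ Real.exp (H x Λ + M * ‖x' - x‖) := by
    rw [Real.exp_add]
    exact h3.trans h4
  exact Real.exp_le_exp.1 h5

end lip
/-- uniform bound `|∂H̃/∂x_j| ≤ C` for the effective Hamiltonian of the
cell problem, assuming the solution depends smoothly on `(x, Λ)`. -/
theorem stmt17 {d : ℕ} (V : (Fin d → ℝ) → (Fin d → ℝ) → ℝ) (hV : SmoothV V)
    (w m : (Fin d → ℝ) → (Fin d → ℝ) → (Fin d → ℝ) → ℝ)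
    (H : (Fin d → ℝ) → (Fin d → ℝ) → ℝ)
    (hsol : ∀ x Λ, CellSolAt V x Λ (w x Λ) (m x Λ) (H x Λ))
    (hws : ∀ y, ContDiff ℝ (⊤ : ℕ∞) fun q : (Fin d → ℝ) × (Fin d → ℝ) => w q.1 q.2 y)
    (hms : ∀ y, ContDiff ℝ (⊤ : ℕ∞) fun q : (Fin d → ℝ) × (Fin d → ℝ) => m q.1 q.2 y)
    (hHs : ContDiff ℝ (⊤ : ℕ∞) (uncurry H)) :
    ∃ C > 0, ∀ (j : Fin d) (x Λ : Fin d → ℝ),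
      |pder j (fun x' => H x' Λ) x| ≤ C := by
  have hVdiff : Differentiable ℝ (uncurry V) := hV.1.differentiable (by simp)
  -- bound on the derivative of V on the fundamental domain
  obtain ⟨M, hMK⟩ := (isCompact_Icc
      (a := (0 : (Fin d → ℝ) × (Fin d → ℝ))) (b := 1)).exists_bound_of_continuousOn
    ((hV.1.continuous_fderiv (by simp)).continuousOn)
  -- extend the bound to all of space by periodicity
  have hMglob : ∀ q : (Fin d → ℝ) × (Fin d → ℝ), ‖fderiv ℝ (uncurry V) q‖ ≤ M := by
    intro q
    set c : (Fin d → ℝ) × (Fin d → ℝ) :=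
      ((fun i => ((-⌊q.1 i⌋ : ℤ) : ℝ)), (fun i => ((-⌊q.2 i⌋ : ℤ) : ℝ))) with hc
    have hper : ∀ z : (Fin d → ℝ) × (Fin d → ℝ), uncurry V (z + c) = uncurry V z := by
      intro z
      show V (z.1 + fun i => ((-⌊q.1 i⌋ : ℤ) : ℝ)) (z.2 + fun i => ((-⌊q.2 i⌋ : ℤ) : ℝ)) = V z.1 z.2
      calc V (z.1 + fun i => ((-⌊q.1 i⌋ : ℤ) : ℝ)) (z.2 + fun i => ((-⌊q.2 i⌋ : ℤ) : ℝ))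
          = V (z.1 + fun i => ((-⌊q.1 i⌋ : ℤ) : ℝ)) z.2 :=
            (hV.2.2 _) z.2 (fun i => -⌊q.2 i⌋)
        _ = V z.1 z.2 := (hV.2.1 z.2) z.1 (fun i => -⌊q.1 i⌋)
    have heq := fderiv_shift_eq hVdiff c hper q
    have hmem : q + c ∈ Set.Icc (0 : (Fin d → ℝ) × (Fin d → ℝ)) 1 := by
      have hfr : ∀ (t : ℝ), t + ((-⌊t⌋ : ℤ) : ℝ) = Int.fract t := by
        intro t; rw [Int.fract]; push_cast; ring
      constructor
      · constructor
        · intro i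
          show (0 : ℝ) ≤ q.1 i + ((-⌊q.1 i⌋ : ℤ) : ℝ)
          rw [hfr]; exact Int.fract_nonneg _
        · intro i
          show (0 : ℝ) ≤ q.2 i + ((-⌊q.2 i⌋ : ℤ) : ℝ)
          rw [hfr]; exact Int.fract_nonneg _
      · constructor
        · intro i
          show q.1 i + ((-⌊q.1 i⌋ : ℤ) : ℝ) ≤ 1
          rw [hfr]; exact (Int.fract_lt_one _).le
        · intro i
          show q.2 i + ((-⌊q.2 i⌋ : ℤ) : ℝ) ≤ 1
          rw [hfr]; exact (Int.fract_lt_one _).le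
    rw [← heq]
    exact hMK _ hmem
  have hM0 : 0 ≤ M := le_trans (norm_nonneg _) (hMK 0 ⟨le_rfl, ⟨fun i => zero_le_one, fun i => zero_le_one⟩⟩)
  refine ⟨M + 1, by linarith, ?_⟩
  intro j x Λ
  -- Lipschitz bound for H in x
  have hlip : ∀ x' : Fin d → ℝ, |H x' Λ - H x Λ| ≤ M * ‖x' - x‖ := by
    intro x'
    rw [abs_sub_le_iff]
    constructor
    · linarith [H_lip hV hsol hMglob x x' Λ]
    · have := H_lip hV hsol hMglob x' x Λ
      rw [norm_sub_rev] at this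
      linarith
  set e : Fin d → ℝ := Pi.single j 1 with he
  set g : ℝ → ℝ := fun t => H (x + t • e) Λ with hg
  have hHΛ : ContDiff ℝ (⊤ : ℕ∞) fun x' => H x' Λ :=
    hHs.comp (contDiff_id.prodMk contDiff_const)
  have hd : HasDerivAt g (pder j (fun x' => H x' Λ) x) 0 := by
    have hinner : HasDerivAt (fun t : ℝ => x + t • e) e 0 := by
      simpa using ((hasDerivAt_id (0 : ℝ)).smul_const e).const_add x
    have hout : HasFDerivAt (fun x' => H x' Λ) (fderiv ℝ (fun x' => H x' Λ) x)
        (x + (0 : ℝ) • e) := by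
      simpa using (hHΛ.differentiable (by simp) x).hasFDerivAt
    exact hout.comp_hasDerivAt 0 hinner
  have hbound : ∀ t : ℝ, |g t - g 0| ≤ M * |t| := by
    intro t
    have h0 : g 0 = H x Λ := by simp [hg]
    have h1 : ‖(x + t • e) - x‖ = |t| := by
      rw [add_sub_cancel_left, norm_smul, he, Pi.norm_single]
      simp
    have := hlip (x + t • e)
    rw [h1] at this
    rw [h0]
    exact this
  have hslope := hasDerivAt_iff_tendsto_slope.1 hd
  have habs : Tendsto (fun t => |slope g 0 t|) (𝓝[≠] (0 : ℝ))
      (𝓝 |pder j (fun x' => H x' Λ) x|) := hslope.abs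
  have hev : ∀ᶠ t in 𝓝[≠] (0 : ℝ), |slope g 0 t| ≤ M := by
    filter_upwards [self_mem_nhdsWithin] with t ht
    have ht0 : t ≠ 0 := ht
    rw [slope_def_field, div_eq_mul_inv]
    rw [abs_mul, abs_inv]
    rw [sub_zero]
    have h2 : |g t - g 0| ≤ M * |t| := hbound t
    calc |g t - g 0| * |t|⁻¹ ≤ (M * |t|) * |t|⁻¹ := by
          apply mul_le_mul_of_nonneg_right h2 (by positivity)
      _ = M := by field_simp
  have hfin : |pder j (fun x' => H x' Λ) x| ≤ M := le_of_tendsto habs hev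
  linarith
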